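/- Let N be a finite set with |N| = n ≥ 1, f : Finset N → ℝ, and j, k distinct elements of N. If f is invariant under the transposition of j and k acting on subsets (i.e., f(S) equals f of the set obtained from S by swapping the membership of j and k, for all S ⊆ N), then φ_j = φ_k, where φ_j = (1/2^(n−1)) Σ_{S ⊆ N, j ∈ S} (f(S) − f(N \ S)). -/
import Mathlib


open Finset

theorem stmt_15 {α : Type*} [Fintype α] [DecidableEq α] (n : ℕ)
    (hn : Fintype.card α = n) (hn1 : 1 ≤ n) (f : Finset α → ℝ)
    (j k : α) (hjk : j ≠ k)
    (hf : ∀ S : Finset α, f (S.image (Equiv.swap j k)) = f S) :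
    (1 / 2 ^ (n - 1) : ℝ) *
        ∑ S ∈ (univ : Finset α).powerset.filter (fun S => j ∈ S),
          (f S - f (univ \ S)) =
      (1 / 2 ^ (n - 1) : ℝ) *
        ∑ S ∈ (univ : Finset α).powerset.filter (fun S => k ∈ S),
          (f S - f (univ \ S)) := by
  congr 1
  have hinv : ∀ S : Finset α, (S.image (Equiv.swap j k)).image (Equiv.swap j k) = S := by
    intro S
    rw [Finset.image_image]
    simp [Function.comp_def]
  have hmem : ∀ (S : Finset α) (x : α), x ∈ S.image (Equiv.swap j k) ↔ Equiv.swap j k x ∈ S := by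
    intro S x
    constructor
    · rintro h
      obtain ⟨y, hy, rfl⟩ := Finset.mem_image.mp h
      simpa using hy
    · intro h
      exact Finset.mem_image.mpr ⟨_, h, by simp⟩
  have hsdiff : ∀ S : Finset α, (univ : Finset α) \ S.image (Equiv.swap j k)
      = ((univ : Finset α) \ S).image (Equiv.swap j k) := by
    intro S
    ext x
    simp [hmem]
  refine Finset.sum_bij' (fun S _ => S.image (Equiv.swap j k))
    (fun S _ => S.image (Equiv.swap j k)) ?_ ?_ (fun S _ => hinv S) (fun S _ => hinv S) ?_
  · intro S hS
    simp only [Finset.mem_filter, Finset.mem_powerset] at hS ⊢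
    refine ⟨Finset.subset_univ _, ?_⟩
    rw [hmem]
    simpa using hS.2
  · intro S hS
    simp only [Finset.mem_filter, Finset.mem_powerset] at hS ⊢
    refine ⟨Finset.subset_univ _, ?_⟩
    rw [hmem]
    simpa using hS.2
  · intro S _
    rw [hf, hsdiff, hf]
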